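/- arXiv:2409.15680 — 2 statements merged into one kernel-verified Lean document; each statement's English description precedes it below -/
import Mathlib

section
/- Let f : ℝ^d → ℝ be L₁-smooth and let μ > 0. Then for every x ∈ ℝ^d, |f^s(x) − f(x)| ≤ μ² L₁ d. -/
/-!
Expand `f (x + μ u) = f x + μ ⟪∇f x, u⟫ + R u`. The mean value inequality on a ball, applied to
the `L`-Lipschitz derivative, gives `|R u| ≤ L μ² ‖u‖²`. Under the standard Gaussian the linear
term has mean zero and `‖u‖²` has mean `d`, so `|f^s x - f x| = |E R| ≤ μ² L d`.
-/

noncomputable section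

/-- `d`-dimensional Euclidean space with the Euclidean norm. -/
abbrev Euc (d : ℕ) := EuclideanSpace ℝ (Fin d)

/-- The standard Gaussian measure `γ_d` on `ℝ^d`: the joint law of `d` independent
standard normal coordinates. -/
def stdGaussian (d : ℕ) : MeasureTheory.Measure (Euc d) :=
  (MeasureTheory.Measure.pi fun _ : Fin d => ProbabilityTheory.gaussianReal 0 1).map
    (MeasurableEquiv.toLp 2 (Fin d → ℝ))

/-- The Gaussian smoothing `f^s(x) = ∫ f(x + μ u) dγ_d(u)` of `f`. -/
def gaussSmooth {d : ℕ} (f : Euc d → ℝ) (μ : ℝ) (x : Euc d) : ℝ :=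
  ∫ u, f (x + μ • u) ∂(stdGaussian d)

open MeasureTheory ProbabilityTheory Module
open scoped RealInnerProductSpace

theorem norm_sub_sub_fderiv_le {E F : Type*} [NormedAddCommGroup E] [NormedSpace ℝ E]
    [NormedAddCommGroup F] [NormedSpace ℝ F] {f : E → F} {L : ℝ} (hf : Differentiable ℝ f)
    (hL : ∀ x y, ‖fderiv ℝ f x - fderiv ℝ f y‖ ≤ L * ‖x - y‖) (x y : E) :
    ‖f y - f x - fderiv ℝ f x (y - x)‖ ≤ L * ‖y - x‖ ^ 2 := by
  rcases eq_or_ne y x with rfl | hyx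
  · simp
  have hL₀ : 0 ≤ L :=
    nonneg_of_mul_nonneg_left ((norm_nonneg _).trans (hL y x)) (norm_pos_iff.2 (sub_ne_zero.2 hyx))
  have bound : ∀ z ∈ Metric.closedBall x ‖y - x‖, ‖fderiv ℝ f z - fderiv ℝ f x‖ ≤ L * ‖y - x‖ :=
    fun z hz => (hL z x).trans (mul_le_mul_of_nonneg_left (mem_closedBall_iff_norm.1 hz) hL₀)
  calc ‖f y - f x - fderiv ℝ f x (y - x)‖ ≤ L * ‖y - x‖ * ‖y - x‖ :=
        (convex_closedBall x _).norm_image_sub_le_of_norm_fderiv_le' (fun z _ => hf z) bound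
          (Metric.mem_closedBall_self (norm_nonneg _)) (mem_closedBall_iff_norm.2 le_rfl)
    _ = L * ‖y - x‖ ^ 2 := by ring

theorem abs_sub_sub_inner_gradient_le {E : Type*} [NormedAddCommGroup E] [InnerProductSpace ℝ E]
    [CompleteSpace E] {f : E → ℝ} {L : ℝ} (hf : Differentiable ℝ f)
    (hL : ∀ x y, ‖gradient f x - gradient f y‖ ≤ L * ‖x - y‖) (x y : E) :
    |f y - f x - ⟪gradient f x, y - x⟫| ≤ L * ‖y - x‖ ^ 2 := by
  rw [inner_gradient_left, ← Real.norm_eq_abs]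
  refine norm_sub_sub_fderiv_le hf (fun a b => ?_) x y
  rw [← toDual_gradient, ← toDual_gradient, ← map_sub, LinearIsometryEquiv.norm_map]
  exact hL a b

section StdGaussian

variable {E : Type*} [NormedAddCommGroup E] [InnerProductSpace ℝ E] [FiniteDimensional ℝ E]
  [MeasurableSpace E] [BorelSpace E]

theorem integrable_inner_stdGaussian (c : E) :
    Integrable (fun u => ⟪c, u⟫) (ProbabilityTheory.stdGaussian E) :=
  IsGaussian.integrable_dual _ (innerSL ℝ c)

theorem integral_inner_stdGaussian (c : E) :
    ∫ u, ⟪c, u⟫ ∂(ProbabilityTheory.stdGaussian E) = 0 := by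
  simpa using integral_inner (IsGaussian.integrable_id (μ := ProbabilityTheory.stdGaussian E)) c

theorem integral_inner_sq_stdGaussian (c : E) :
    ∫ u, ⟪c, u⟫ ^ 2 ∂(ProbabilityTheory.stdGaussian E) = ‖c‖ ^ 2 := by
  have := variance_dual_stdGaussian (innerSL ℝ c)
  rw [variance_of_integral_eq_zero (innerSL ℝ c).continuous.aemeasurable
    (integral_inner_stdGaussian c), innerSL_apply_norm] at this
  simpa using this

theorem integrable_norm_sq_stdGaussian :
    Integrable (fun u : E => ‖u‖ ^ 2) (ProbabilityTheory.stdGaussian E) :=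
  IsGaussian.memLp_two_id.integrable_norm_pow two_ne_zero

theorem integral_norm_sq_stdGaussian :
    ∫ u : E, ‖u‖ ^ 2 ∂(ProbabilityTheory.stdGaussian E) = finrank ℝ E := by
  let b := stdOrthonormalBasis ℝ E
  simp_rw [← b.sum_sq_inner_right]
  have hmem (i) : MemLp (fun u => ⟪b i, u⟫) 2 (ProbabilityTheory.stdGaussian E) :=
    IsGaussian.memLp_dual _ (innerSL ℝ (b i)) 2 (by simp)
  rw [integral_finsetSum _ fun i _ => (hmem i).integrable_sq]
  simp [integral_inner_sq_stdGaussian, b.orthonormal.1]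

theorem abs_integral_comp_add_smul_stdGaussian_sub_le {f : E → ℝ} {L : ℝ}
    (hf : Differentiable ℝ f) (hL : ∀ x y, ‖gradient f x - gradient f y‖ ≤ L * ‖x - y‖)
    (μ : ℝ) (x : E) :
    |∫ u, f (x + μ • u) ∂(ProbabilityTheory.stdGaussian E) - f x| ≤ μ ^ 2 * L * finrank ℝ E := by
  set γ := ProbabilityTheory.stdGaussian E
  set g := gradient f x
  let R u := f (x + μ • u) - f x - μ * ⟪g, u⟫
  have hR (u) : ‖R u‖ ≤ μ ^ 2 * L * ‖u‖ ^ 2 := by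
    have := abs_sub_sub_inner_gradient_le hf hL x (x + μ • u)
    rw [add_sub_cancel_left, inner_smul_right, norm_smul, mul_pow, Real.norm_eq_abs, sq_abs]
      at this
    rw [Real.norm_eq_abs]
    linarith
  have hR_int : Integrable R γ :=
    (integrable_norm_sq_stdGaussian.const_mul _).mono'
      (by have := hf.continuous; fun_prop : Continuous R).aestronglyMeasurable (ae_of_all _ hR)
  have hlin_int : Integrable (fun u => μ * ⟪g, u⟫) γ := (integrable_inner_stdGaussian g).const_mul μ
  have hsplit : ∫ u, f (x + μ • u) ∂γ = ∫ u, R u ∂γ + f x := by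
    have hdecomp : (fun u => f (x + μ • u)) = fun u => R u + (f x + μ * ⟪g, u⟫) := by
      ext u; simp only [R]; ring
    have hconst_add : Integrable (fun u => f x + μ * ⟪g, u⟫) γ := (integrable_const _).add hlin_int
    rw [hdecomp, integral_add hR_int hconst_add, integral_add (integrable_const _) hlin_int,
      integral_const_mul, integral_inner_stdGaussian]
    simp
  calc |∫ u, f (x + μ • u) ∂γ - f x| = ‖∫ u, R u ∂γ‖ := by
        rw [hsplit, add_sub_cancel_right, Real.norm_eq_abs]
    _ ≤ ∫ u, μ ^ 2 * L * ‖u‖ ^ 2 ∂γ :=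
        norm_integral_le_of_norm_le (integrable_norm_sq_stdGaussian.const_mul _) (ae_of_all _ hR)
    _ = μ ^ 2 * L * finrank ℝ E := by
        rw [integral_const_mul, integral_norm_sq_stdGaussian]

end StdGaussian

theorem stdGaussian_eq_stdGaussian_euc (d : ℕ) :
    stdGaussian d = ProbabilityTheory.stdGaussian (Euc d) :=
  map_pi_eq_stdGaussian

theorem stmt_2_general (d : ℕ) (L₁ μ : ℝ) (f : Euc d → ℝ)
    (hdiff : Differentiable ℝ f)
    (hsm : ∀ x y : Euc d, ‖gradient f x - gradient f y‖ ≤ L₁ * ‖x - y‖) (x : Euc d) :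
    |gaussSmooth f μ x - f x| ≤ μ ^ 2 * L₁ * d := by
  simpa [gaussSmooth, stdGaussian_eq_stdGaussian_euc] using
    abs_integral_comp_add_smul_stdGaussian_sub_le hdiff hsm μ x

/-- If `f : ℝ^d → ℝ` is `L₁`-smooth and `μ > 0`, then for every `x`,
`|f^s(x) − f(x)| ≤ μ² L₁ d`. -/
theorem stmt_2 (d : ℕ) (L₁ μ : ℝ) (hμ : 0 < μ) (f : Euc d → ℝ)
    (hdiff : Differentiable ℝ f)
    (hsm : ∀ x y : Euc d, ‖gradient f x - gradient f y‖ ≤ L₁ * ‖x - y‖) (x : Euc d) :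
    |gaussSmooth f μ x - f x| ≤ μ ^ 2 * L₁ * d :=
  stmt_2_general d L₁ μ f hdiff hsm x

end
end

section
/- Let γ ∈ (0,1), let T ≥ 1 be an integer, let (α_k)_{k=0}^{T} and (μ_k)_{k=1}^{T} be positive scalars such that the sequence (α_k/μ_k)_{k=1}^{T} is non-increasing, and let G_0, …, G_{T−1} be nonnegative reals. Then Σ_{k=1}^{T} (α_k/μ_k) Σ_{τ=0}^{k−1} γ^{k−τ−2} α_τ G_τ ≤ (1/(γ(1−γ))) Σ_{k=0}^{T−1} (α_{k+1}/μ_{k+1}) α_k G_k. -/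
noncomputable section

/-- Summation-by-parts style bound for geometric double sums: for `γ ∈ (0,1)`, positive
sequences `α`, `μ` with `α_k/μ_k` non-increasing on `[1, T]`, and nonnegative `G`,
`Σ_{k=1}^T (α_k/μ_k) Σ_{τ=0}^{k−1} γ^{k−τ−2} α_τ G_τ
  ≤ (1/(γ(1−γ))) Σ_{k=0}^{T−1} (α_{k+1}/μ_{k+1}) α_k G_k`. -/
theorem stmt_14 (γ : ℝ) (hγ : γ ∈ Set.Ioo (0 : ℝ) 1) (T : ℕ) (hT : 1 ≤ T)
    (α μs : ℕ → ℝ)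
    (hα : ∀ k, k ≤ T → 0 < α k)
    (hμ : ∀ k, 1 ≤ k → k ≤ T → 0 < μs k)
    (hmono : ∀ k l, 1 ≤ k → k ≤ l → l ≤ T → α l / μs l ≤ α k / μs k)
    (G : ℕ → ℝ) (hG : ∀ k, k ≤ T - 1 → 0 ≤ G k) :
    ∑ k ∈ Finset.Icc 1 T,
        (α k / μs k) * ∑ τ ∈ Finset.range k, γ ^ ((k : ℤ) - (τ : ℤ) - 2) * α τ * G τ
      ≤ (1 / (γ * (1 - γ))) * ∑ k ∈ Finset.range T, (α (k + 1) / μs (k + 1)) * α k * G k := by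
  obtain ⟨hγ0, hγ1⟩ := hγ
  have hγne : γ ≠ 0 := ne_of_gt hγ0
  have h1γ : 0 < 1 - γ := by linarith
  -- geometric series bound
  have geom : ∀ n : ℕ, ∑ j ∈ Finset.range n, γ ^ j ≤ 1 / (1 - γ) := by
    intro n
    have h := geom_sum_eq (by linarith : γ ≠ 1) n
    rw [h]
    have hpow : 0 ≤ γ ^ n := pow_nonneg hγ0.le n
    have e : (γ ^ n - 1) / (γ - 1) = (1 - γ ^ n) / (1 - γ) := by
      rw [div_eq_div_iff (by linarith) (by linarith)]; ring
    rw [e, div_le_div_iff₀ h1γ h1γ]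
    nlinarith
  -- inner geometric sum bound
  have inner_geom : ∀ τ : ℕ, τ < T →
      ∑ k ∈ Finset.Icc (τ + 1) T, γ ^ ((k : ℤ) - (τ : ℤ) - 2) ≤ 1 / (γ * (1 - γ)) := by
    intro τ hτ
    have : Finset.Icc (τ + 1) T = Finset.Ico (τ + 1) (T + 1) := by
      rw [Finset.Ico_add_one_right_eq_Icc]
    rw [this, Finset.sum_Ico_eq_sum_range]
    have heq : ∀ j : ℕ, γ ^ (((τ + 1 + j : ℕ) : ℤ) - (τ : ℤ) - 2) = γ ^ j / γ := by
      intro j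
      have : ((τ + 1 + j : ℕ) : ℤ) - (τ : ℤ) - 2 = (j : ℤ) - 1 := by push_cast; ring
      rw [this, zpow_sub₀ hγne, zpow_natCast, zpow_one]
    simp only [heq]
    rw [← Finset.sum_div]
    rw [div_le_div_iff₀ hγ0 (by positivity)]
    have := geom (T + 1 - (τ + 1))
    rw [le_div_iff₀ h1γ] at this
    have hs : (0:ℝ) ≤ ∑ i ∈ Finset.range (T + 1 - (τ + 1)), γ ^ i := by positivity
    nlinarith
  -- swap order of summation
  have swap :
      ∑ k ∈ Finset.Icc 1 T, ∑ τ ∈ Finset.range k,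
          (α k / μs k) * (γ ^ ((k : ℤ) - (τ : ℤ) - 2) * α τ * G τ)
        = ∑ τ ∈ Finset.range T, ∑ k ∈ Finset.Icc (τ + 1) T,
            (α k / μs k) * (γ ^ ((k : ℤ) - (τ : ℤ) - 2) * α τ * G τ) := by
    apply Finset.sum_comm'
    intro k τ
    simp only [Finset.mem_Icc, Finset.mem_range]
    omega
  simp only [Finset.mul_sum]
  rw [swap]
  apply Finset.sum_le_sum
  intro τ hτ
  rw [Finset.mem_range] at hτ
  have hGτ : 0 ≤ G τ := hG τ (by omega)
  have hατ : 0 ≤ α τ := (hα τ (by omega)).le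
  have hr : 0 ≤ α (τ + 1) / μs (τ + 1) :=
    div_nonneg (hα (τ + 1) (by omega)).le (hμ (τ + 1) (by omega) (by omega)).le
  have step1 : ∀ k ∈ Finset.Icc (τ + 1) T,
      (α k / μs k) * (γ ^ ((k : ℤ) - (τ : ℤ) - 2) * α τ * G τ)
        ≤ (α (τ + 1) / μs (τ + 1)) * γ ^ ((k : ℤ) - (τ : ℤ) - 2) * (α τ * G τ) := by
    intro k hk
    rw [Finset.mem_Icc] at hk
    have hz : (0:ℝ) < γ ^ ((k : ℤ) - (τ : ℤ) - 2) := zpow_pos hγ0 _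
    have hm := hmono (τ + 1) k (by omega) hk.1 hk.2
    calc (α k / μs k) * (γ ^ ((k : ℤ) - (τ : ℤ) - 2) * α τ * G τ)
        = (α k / μs k) * γ ^ ((k : ℤ) - (τ : ℤ) - 2) * (α τ * G τ) := by ring
      _ ≤ (α (τ + 1) / μs (τ + 1)) * γ ^ ((k : ℤ) - (τ : ℤ) - 2) * (α τ * G τ) := by
          apply mul_le_mul_of_nonneg_right _ (by positivity)
          exact mul_le_mul_of_nonneg_right hm hz.le
  calc ∑ k ∈ Finset.Icc (τ + 1) T, (α k / μs k) * (γ ^ ((k : ℤ) - (τ : ℤ) - 2) * α τ * G τ)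
      ≤ ∑ k ∈ Finset.Icc (τ + 1) T,
          (α (τ + 1) / μs (τ + 1)) * γ ^ ((k : ℤ) - (τ : ℤ) - 2) * (α τ * G τ) :=
        Finset.sum_le_sum step1
    _ = (α (τ + 1) / μs (τ + 1)) *
          (∑ k ∈ Finset.Icc (τ + 1) T, γ ^ ((k : ℤ) - (τ : ℤ) - 2)) * (α τ * G τ) := by
        rw [Finset.mul_sum, Finset.sum_mul]
    _ ≤ (α (τ + 1) / μs (τ + 1)) * (1 / (γ * (1 - γ))) * (α τ * G τ) := by
        apply mul_le_mul_of_nonneg_right _ (by positivity)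
        exact mul_le_mul_of_nonneg_left (inner_geom τ hτ) hr
    _ = 1 / (γ * (1 - γ)) * (α (τ + 1) / μs (τ + 1) * α τ * G τ) := by ring

end
end
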